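/- For each fixed k ≥ 1, the family F = {f_n : n ∈ ℕ} with f_n(z) = n z^k on the open unit disk is not normal, even though the k-th derivatives f_n^{(k)}(z) = n·k! omit the constants 1/2, 1/3, 1/4 (which are at mutually positive spherical distance), and for every n, m and each j the functions f_n^{(k)} − a_j and f_m^{(k)} − a_j share the value 0, for a_1 = 1/2, a_2 = 1/3, a_3 = 1/4. This shows the multiplicity hypothesis on zeros of f cannot be dropped in the derivative-sharing normality criterion. -/

import Mathlib

open Filter Topology OnePoint Metric
open scoped Classical

noncomputable def chord : OnePoint ℂ → OnePoint ℂ → ℝ := fun x y =>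
  Option.elim (α := ℂ) x
    (Option.elim (α := ℂ) y 0 (fun b => 2 / Real.sqrt (1 + ‖b‖ ^ 2)))
    (fun a =>
      Option.elim (α := ℂ) y (2 / Real.sqrt (1 + ‖a‖ ^ 2))
        (fun b => 2 * ‖a - b‖ / Real.sqrt ((1 + ‖a‖ ^ 2) * (1 + ‖b‖ ^ 2))))

/-- spherical (arclength) metric on the Riemann sphere, diameter π -/
noncomputable def sph (x y : OnePoint ℂ) : ℝ := 2 * Real.arcsin (chord x y / 2)

/-- value of a meromorphic function as a point of the Riemann sphere -/
noncomputable def sphVal (f : ℂ → ℂ) (z : ℂ) : OnePoint ℂ :=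
  if Tendsto (fun w => ‖f w‖) (𝓝[≠] z) atTop then ∞
  else (((limUnder (𝓝[≠] z) f : ℂ) : OnePoint ℂ))

def IsMeroSphere (D : Set ℂ) (A : ℂ → OnePoint ℂ) : Prop :=
  ∃ a : ℂ → ℂ, MeromorphicOn a D ∧ ∀ z ∈ D, A z = sphVal a z

def IsMeroSphereOrInf (D : Set ℂ) (A : ℂ → OnePoint ℂ) : Prop :=
  IsMeroSphere D A ∨ ∀ z ∈ D, A z = ∞

/-- Normality: every sequence has a subsequence converging locally uniformly (spherically)
to a meromorphic function or to ∞. -/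
def NormalOn (D : Set ℂ) (F : Set (ℂ → ℂ)) : Prop :=
  ∀ f : ℕ → ℂ → ℂ, (∀ n, f n ∈ F) →
    ∃ φ : ℕ → ℕ, StrictMono φ ∧ ∃ G : ℂ → OnePoint ℂ,
      IsMeroSphereOrInf D G ∧
      ∀ K : Set ℂ, K ⊆ D → IsCompact K → ∀ ε : ℝ, 0 < ε →
        ∀ᶠ n in atTop, ∀ z ∈ K, sph (sphVal (f (φ n)) z) (G z) < ε

/-- rational map of degree at most m -/
def IsRatDegLE (m : ℕ) (R : ℂ → ℂ) : Prop :=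
  ∃ p q : Polynomial ℂ, q ≠ 0 ∧ p.degree ≤ (m : ℕ) ∧ q.degree ≤ (m : ℕ) ∧
    ∀ z : ℂ, R z = p.eval z / q.eval z


lemma chord_coe_coe (a b : ℂ) :
    chord (a : OnePoint ℂ) (b : OnePoint ℂ) =
      2 * ‖a - b‖ / Real.sqrt ((1 + ‖a‖ ^ 2) * (1 + ‖b‖ ^ 2)) := rfl
lemma chord_coe_infty (a : ℂ) : chord (a : OnePoint ℂ) ∞ = 2 / Real.sqrt (1 + ‖a‖ ^ 2) := rfl
lemma sph_coe_pos {a b : ℂ} (h : a ≠ b) : 0 < sph (a : OnePoint ℂ) (b : OnePoint ℂ) := by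
  have h1 : 0 < Real.sqrt ((1 + ‖a‖ ^ 2) * (1 + ‖b‖ ^ 2)) := by
    apply Real.sqrt_pos.2; positivity
  have h2 : 0 < ‖a - b‖ := by simpa [sub_eq_zero] using h
  have : 0 < chord (a : OnePoint ℂ) (b : OnePoint ℂ) := by
    rw [chord_coe_coe]; positivity
  have := Real.arcsin_pos.2 (by linarith : 0 < chord (a : OnePoint ℂ) (b : OnePoint ℂ) / 2)
  unfold sph; linarith
lemma sph_coe_infty_pos (a : ℂ) : 0 < sph (a : OnePoint ℂ) ∞ := by
  have h1 : 0 < Real.sqrt (1 + ‖a‖ ^ 2) := by apply Real.sqrt_pos.2; positivity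
  have : 0 < chord (a : OnePoint ℂ) ∞ := by rw [chord_coe_infty]; positivity
  have := Real.arcsin_pos.2 (by linarith : 0 < chord (a : OnePoint ℂ) ∞ / 2)
  unfold sph; linarith
lemma sphVal_of_continuousAt {f : ℂ → ℂ} {z : ℂ} (h : ContinuousAt f z) :
    sphVal f z = (f z : OnePoint ℂ) := by
  have ht : Tendsto f (𝓝[≠] z) (𝓝 (f z)) := h.tendsto.mono_left nhdsWithin_le_nhds
  have hn : ¬ Tendsto (fun w => ‖f w‖) (𝓝[≠] z) atTop :=
    not_tendsto_atTop_of_tendsto_nhds ht.norm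
  rw [sphVal, if_neg hn, ht.limUnder_eq]
lemma sph_ge_of_big {c w : ℂ} (hw : max 1 (2 * (‖c‖ + 1)) ≤ ‖w‖) :
    2 * Real.arcsin (1 / (Real.sqrt 2 * Real.sqrt (1 + ‖c‖ ^ 2)) / 2)
      ≤ sph (w : OnePoint ℂ) (c : OnePoint ℂ) := by
  have hw1 : (1:ℝ) ≤ ‖w‖ := le_trans (le_max_left _ _) hw
  have hw2 : 2 * (‖c‖ + 1) ≤ ‖w‖ := le_trans (le_max_right _ _) hw
  have hc0 : (0:ℝ) ≤ ‖c‖ := norm_nonneg c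
  have hs2 : (0:ℝ) < Real.sqrt 2 := Real.sqrt_pos.2 (by norm_num)
  have hsc : (0:ℝ) < Real.sqrt (1 + ‖c‖ ^ 2) := Real.sqrt_pos.2 (by positivity)
  have hwc : ‖w‖ / 2 ≤ ‖w - c‖ := by
    have := norm_sub_norm_le w c
    linarith
  have hsplit : Real.sqrt ((1 + ‖w‖ ^ 2) * (1 + ‖c‖ ^ 2))
      = Real.sqrt (1 + ‖w‖ ^ 2) * Real.sqrt (1 + ‖c‖ ^ 2) :=
    Real.sqrt_mul (by positivity) _
  have hsw : Real.sqrt (1 + ‖w‖ ^ 2) ≤ Real.sqrt 2 * ‖w‖ := by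
    rw [show Real.sqrt 2 * ‖w‖ = Real.sqrt (2 * ‖w‖ ^ 2) by
      rw [Real.sqrt_mul (by norm_num), Real.sqrt_sq (by linarith)]]
    apply Real.sqrt_le_sqrt
    nlinarith
  have hspos : 0 < Real.sqrt (1 + ‖w‖ ^ 2) := Real.sqrt_pos.2 (by positivity)
  have hchord : 1 / (Real.sqrt 2 * Real.sqrt (1 + ‖c‖ ^ 2)) / 2
      ≤ chord (w : OnePoint ℂ) (c : OnePoint ℂ) / 2 := by
    rw [chord_coe_coe, hsplit]
    have key : (‖w‖ / 2) / (Real.sqrt 2 * ‖w‖ * Real.sqrt (1 + ‖c‖ ^ 2))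
        ≤ ‖w - c‖ / (Real.sqrt (1 + ‖w‖ ^ 2) * Real.sqrt (1 + ‖c‖ ^ 2)) :=
      div_le_div₀ (norm_nonneg _) hwc (by positivity)
        (mul_le_mul_of_nonneg_right hsw hsc.le)
    have heq : (‖w‖ / 2) / (Real.sqrt 2 * ‖w‖ * Real.sqrt (1 + ‖c‖ ^ 2))
        = 1 / (Real.sqrt 2 * Real.sqrt (1 + ‖c‖ ^ 2)) / 2 := by
      have ha : ‖w‖ ≠ 0 := by
        have : ‖w‖ ≠ 0 := by positivity
        simpa using this
      have hb : Real.sqrt 2 ≠ 0 := hs2.ne'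
      have hcne : Real.sqrt (1 + ‖c‖ ^ 2) ≠ 0 := hsc.ne'
      field_simp
    have h2 : 2 * ‖w - c‖ / (Real.sqrt (1 + ‖w‖ ^ 2) * Real.sqrt (1 + ‖c‖ ^ 2)) / 2
        = ‖w - c‖ / (Real.sqrt (1 + ‖w‖ ^ 2) * Real.sqrt (1 + ‖c‖ ^ 2)) := by
      ring
    rw [h2, ← heq]
    exact key
  have := Real.monotone_arcsin hchord
  unfold sph
  linarith
lemma iterA (c : ℂ) (k : ℕ) : ∀ m, m ≤ k →
    iteratedDeriv m (fun z : ℂ => c * z ^ k)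
      = fun z => c * (k.descFactorial m : ℂ) * z ^ (k - m) := by
  intro m
  induction m with
  | zero => intro _; simp
  | succ m ih =>
    intro hm
    rw [iteratedDeriv_succ, ih (Nat.le_of_succ_le hm)]
    funext z
    have hd : DifferentiableAt ℂ (fun z : ℂ => z ^ (k - m)) z := by fun_prop
    simp only [mul_assoc]
    rw [deriv_const_mul _ (by fun_prop), deriv_const_mul _ hd, deriv_pow_field]
    have he : k - (m + 1) = (k - m) - 1 := by omega
    rw [he, Nat.descFactorial_succ]
    push_cast
    ring
lemma iterB (c : ℂ) (k : ℕ) :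
    iteratedDeriv k (fun z : ℂ => c * z ^ k) = fun _ => c * (k.factorial : ℂ) := by
  rw [iterA c k k le_rfl]
  funext z
  simp [Nat.descFactorial_self]

theorem example_nzk_not_normal (k : ℕ) (hk : 1 ≤ k) :
    (∀ n : ℕ, iteratedDeriv k (fun z : ℂ => ((n:ℂ)+1) * z ^ k) =
        fun _ => ((n:ℂ)+1) * (k.factorial : ℂ)) ∧
    (∀ n : ℕ, ∀ z ∈ Metric.ball (0:ℂ) 1, ∀ a : ℂ,
        (a = 1/2 ∨ a = 1/3 ∨ a = 1/4) →
        iteratedDeriv k (fun z : ℂ => ((n:ℂ)+1) * z ^ k) z ≠ a) ∧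
    (∀ a b : ℂ, (a = 1/2 ∨ a = 1/3 ∨ a = 1/4) → (b = 1/2 ∨ b = 1/3 ∨ b = 1/4) → a ≠ b →
        0 < sph ((a : ℂ) : OnePoint ℂ) ((b : ℂ) : OnePoint ℂ)) ∧
    (∀ n m : ℕ, ∀ a : ℂ, (a = 1/2 ∨ a = 1/3 ∨ a = 1/4) → ∀ z ∈ Metric.ball (0:ℂ) 1,
        (iteratedDeriv k (fun z : ℂ => ((n:ℂ)+1) * z ^ k) z - a = 0 ↔
         iteratedDeriv k (fun z : ℂ => ((m:ℂ)+1) * z ^ k) z - a = 0)) ∧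
    ¬ NormalOn (Metric.ball (0:ℂ) 1)
        {g | ∃ n : ℕ, g = fun z : ℂ => ((n:ℂ)+1) * z ^ k} := by
  have key2 : ∀ n : ℕ, ∀ z ∈ Metric.ball (0:ℂ) 1, ∀ a : ℂ,
      (a = 1/2 ∨ a = 1/3 ∨ a = 1/4) →
      iteratedDeriv k (fun z : ℂ => ((n:ℂ)+1) * z ^ k) z ≠ a := by
    intro n z _ a ha
    rw [iterB]
    intro heq0
    replace heq : ((n:ℂ)+1) * (k.factorial : ℂ) = a := heq0
    have h1 : (1:ℝ) ≤ ‖((n:ℂ)+1) * (k.factorial : ℂ)‖ := by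
      rw [norm_mul]
      have e1 : ((n:ℂ)+1) = ((n+1 : ℕ) : ℂ) := by push_cast; ring
      rw [e1, Complex.norm_natCast, Complex.norm_natCast]
      have h2 : (1:ℝ) ≤ (n+1 : ℕ) := by exact_mod_cast Nat.succ_le_succ (Nat.zero_le n)
      have h3 : (1:ℝ) ≤ (k.factorial : ℕ) := by exact_mod_cast k.factorial_pos
      nlinarith
    rcases ha with rfl | rfl | rfl <;> rw [heq] at h1 <;> norm_num at h1
  refine ⟨fun n => iterB _ k, key2, fun a b _ _ hab => sph_coe_pos hab, ?_, ?_⟩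
  · intro n m a ha z hz
    constructor <;> intro h
    · exact ((key2 n z hz a ha) (sub_eq_zero.1 h)).elim
    · exact ((key2 m z hz a ha) (sub_eq_zero.1 h)).elim
  · intro hN
    obtain ⟨φ, hφ, G, hG, hconv⟩ := hN (fun n z => ((n:ℂ)+1) * z ^ k) (fun n => ⟨n, rfl⟩)
    have h0mem : (0:ℂ) ∈ Metric.ball (0:ℂ) 1 := by simp
    have hsph0 : ∀ m : ℕ, sphVal (fun z : ℂ => ((m:ℂ)+1) * z ^ k) 0 = ((0:ℂ) : OnePoint ℂ) := by
      intro m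
      rw [sphVal_of_continuousAt (by fun_prop)]
      norm_num [zero_pow (by omega : k ≠ 0)]
    have hG0 : G 0 = ((0:ℂ) : OnePoint ℂ) := by
      by_contra hne
      have hpos : 0 < sph ((0:ℂ) : OnePoint ℂ) (G 0) := by
        cases hg : G 0 with
        | infty => exact sph_coe_infty_pos 0
        | coe c =>
          refine sph_coe_pos fun h0 => hne ?_
          rw [hg, ← h0]
      obtain ⟨n, hn⟩ :=
        (hconv {0} (Set.singleton_subset_iff.2 h0mem) isCompact_singleton _ hpos).exists
      have := hn 0 rfl
      rw [hsph0] at this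
      exact absurd this (lt_irrefl _)
    have hGy : ∀ y ∈ Metric.ball (0:ℂ) 1, y ≠ 0 → G y = ∞ := by
      intro y hy hy0
      cases hg : G y with
      | infty => rfl
      | coe c =>
        exfalso
        have hδpos : 0 < 1 / (Real.sqrt 2 * Real.sqrt (1 + ‖c‖ ^ 2)) := by
          have h2 : (0:ℝ) < Real.sqrt 2 := Real.sqrt_pos.2 (by norm_num)
          have h3 : (0:ℝ) < Real.sqrt (1 + ‖c‖ ^ 2) := Real.sqrt_pos.2 (by positivity)
          positivity
        have hεpos : 0 < 2 * Real.arcsin (1 / (Real.sqrt 2 * Real.sqrt (1 + ‖c‖ ^ 2)) / 2) := by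
          have := Real.arcsin_pos.2 (by linarith :
            (0:ℝ) < 1 / (Real.sqrt 2 * Real.sqrt (1 + ‖c‖ ^ 2)) / 2)
          linarith
        have hev1 := hconv {y} (Set.singleton_subset_iff.2 hy) isCompact_singleton _ hεpos
        have hyk : (0:ℝ) < ‖y‖ ^ k := by
          have : (0:ℝ) < ‖y‖ := by simpa [norm_pos_iff] using hy0
          positivity
        have hev2 : ∀ᶠ n in atTop,
            max 1 (2 * (‖c‖ + 1)) ≤ ‖((φ n : ℂ)+1) * y ^ k‖ := by
          refine eventually_atTop.2 ⟨⌈max 1 (2 * (‖c‖ + 1)) / ‖y‖ ^ k⌉₊, fun n hn => ?_⟩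
          have h1 : max 1 (2 * (‖c‖ + 1)) / ‖y‖ ^ k
              ≤ (⌈max 1 (2 * (‖c‖ + 1)) / ‖y‖ ^ k⌉₊ : ℝ) := Nat.le_ceil _
          have h2 : ((⌈max 1 (2 * (‖c‖ + 1)) / ‖y‖ ^ k⌉₊ : ℕ) : ℝ) ≤ (n : ℝ) := by
            exact_mod_cast hn
          have h3 : (n : ℝ) ≤ (φ n : ℝ) := by exact_mod_cast hφ.le_apply
          have hnorm : ‖((φ n : ℂ)+1) * y ^ k‖ = ((φ n : ℝ) + 1) * ‖y‖ ^ k := by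
            rw [norm_mul, norm_pow]
            congr 1
            have e1 : ((φ n : ℂ)+1) = ((φ n + 1 : ℕ) : ℂ) := by push_cast; ring
            rw [e1, Complex.norm_natCast]
            push_cast
            ring
          rw [hnorm]
          calc max 1 (2 * (‖c‖ + 1))
              = (max 1 (2 * (‖c‖ + 1)) / ‖y‖ ^ k) * ‖y‖ ^ k := by
                rw [div_mul_cancel₀ _ hyk.ne']
            _ ≤ ((φ n : ℝ) + 1) * ‖y‖ ^ k := by
                apply mul_le_mul_of_nonneg_right _ hyk.le
                linarith
        obtain ⟨n, hn1, hn2⟩ := (hev1.and hev2).exists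
        have hv := hn1 y rfl
        rw [sphVal_of_continuousAt (by fun_prop), hg] at hv
        have hb := sph_ge_of_big hn2
        linarith
    rcases hG with ⟨a, ha, haG⟩ | hinf
    · have hhalf : (1/2 : ℂ) ∈ Metric.ball (0:ℂ) 1 := by
        simp only [Metric.mem_ball, dist_zero_right]
        rw [show ((1:ℂ)/2) = ((1/2 : ℝ) : ℂ) by norm_num, Complex.norm_real]
        norm_num
      have hm := (ha (1/2) hhalf).eventually_analyticAt
      have hball : ∀ᶠ y in 𝓝[≠] (1/2:ℂ), y ∈ Metric.ball (0:ℂ) 1 :=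
        (Metric.isOpen_ball.eventually_mem hhalf).filter_mono nhdsWithin_le_nhds
      have hne0 : ∀ᶠ y in 𝓝[≠] (1/2:ℂ), y ≠ 0 :=
        (eventually_ne_nhds (by norm_num : (1/2:ℂ) ≠ 0)).filter_mono nhdsWithin_le_nhds
      obtain ⟨y, hya, hyb, hyn⟩ := (hm.and (hball.and hne0)).exists
      have hGyy := hGy y hyb hyn
      rw [haG y hyb] at hGyy
      by_cases htop : Tendsto (fun w => ‖a w‖) (𝓝[≠] y) atTop
      · exact not_tendsto_atTop_of_tendsto_nhds
          ((hya.continuousAt.tendsto.mono_left nhdsWithin_le_nhds).norm) htop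
      · rw [sphVal, if_neg htop] at hGyy
        exact OnePoint.coe_ne_infty _ hGyy
    · have := hinf 0 h0mem
      rw [hG0] at this
      exact OnePoint.coe_ne_infty _ this
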